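/- Let n ≥ 1 and let γ : [0, ∞) → ℝⁿ be a continuously differentiable curve with γₙ(t) > 0 for all t, which is divergent in the open half-space ℝ₊ⁿ = {x ∈ ℝⁿ : xₙ > 0}, i.e. for every compact subset K of ℝ₊ⁿ there is T ≥ 0 with γ(t) ∉ K for all t ≥ T. Then lim_{T→∞} ∫₀ᵀ coth(γₙ(t)) ‖γ'(t)‖ dt = +∞. -/

import Mathlib

lemma euclid_coord_abs_le_norm {n : ℕ} (x : EuclideanSpace ℝ (Fin n)) (i : Fin n) :
    |x i| ≤ ‖x‖ := by
  rw [EuclideanSpace.norm_eq, Real.le_sqrt (abs_nonneg _)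
    (Finset.sum_nonneg fun j _ => sq_nonneg _)]
  have := Finset.single_le_sum (f := fun j => ‖x j‖ ^ 2)
    (fun j _ => sq_nonneg _) (Finset.mem_univ i)
  simpa [Real.norm_eq_abs, sq_abs] using this

/-- Completeness claim of Example 3 (EX4): every divergent `C¹` curve in the half-space
`{x ∈ ℝⁿ : xₙ > 0}` has infinite length in the conformal metric `coth²(xₙ) g_Euc`. -/
theorem divergent_curve_infinite_length (n : ℕ) (hn : 1 ≤ n)
    (γ γ' : ℝ → EuclideanSpace ℝ (Fin n))
    (hderiv : ∀ t : ℝ, 0 ≤ t → HasDerivAt γ (γ' t) t)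
    (hcont : ContinuousOn γ' (Set.Ici (0 : ℝ)))
    (hpos : ∀ t : ℝ, 0 ≤ t → 0 < γ t ⟨n - 1, by omega⟩)
    (hdiv : ∀ K : Set (EuclideanSpace ℝ (Fin n)),
      K ⊆ {x | 0 < x ⟨n - 1, by omega⟩} → IsCompact K →
      ∃ T : ℝ, 0 ≤ T ∧ ∀ t : ℝ, T ≤ t → γ t ∉ K) :
    Filter.Tendsto
      (fun T : ℝ => ∫ t in (0 : ℝ)..T,
        (Real.cosh (γ t ⟨n - 1, by omega⟩) / Real.sinh (γ t ⟨n - 1, by omega⟩)) * ‖γ' t‖)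
      Filter.atTop Filter.atTop := by
  set e : Fin n := ⟨n - 1, by omega⟩ with he
  set f : ℝ → ℝ := fun t => γ t e with hfdef
  set f' : ℝ → ℝ := fun t => γ' t e with hf'def
  set h : ℝ → ℝ := fun t => (Real.cosh (f t) / Real.sinh (f t)) * ‖γ' t‖ with hhdef
  set L : ℝ → ℝ := fun T => ∫ t in (0:ℝ)..T, h t with hLdef
  show Filter.Tendsto L Filter.atTop Filter.atTop
  -- basic continuity facts
  have hγc : ContinuousOn γ (Set.Ici (0:ℝ)) := fun t ht =>
    ((hderiv t ht).continuousAt).continuousWithinAt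
  have hfd : ∀ t : ℝ, 0 ≤ t → HasDerivAt f (f' t) t := by
    intro t ht
    have := ((EuclideanSpace.proj (𝕜 := ℝ) e).hasFDerivAt.comp_hasDerivAt t (hderiv t ht))
    exact this
  have hfc : ContinuousOn f (Set.Ici (0:ℝ)) := fun t ht =>
    ((hfd t ht).continuousAt).continuousWithinAt
  have hsinhpos : ∀ t : ℝ, 0 ≤ t → 0 < Real.sinh (f t) := fun t ht =>
    Real.sinh_pos_iff.2 (hpos t ht)
  have hcothnn : ∀ t : ℝ, 0 ≤ t → 0 ≤ Real.cosh (f t) / Real.sinh (f t) := fun t ht =>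
    div_nonneg (Real.cosh_pos _).le (hsinhpos t ht).le
  have hcoth1 : ∀ t : ℝ, 0 ≤ t → 1 ≤ Real.cosh (f t) / Real.sinh (f t) := fun t ht =>
    (one_le_div (hsinhpos t ht)).2 (Real.sinh_lt_cosh _).le
  have hhc : ContinuousOn h (Set.Ici (0:ℝ)) := by
    apply ContinuousOn.mul
    · exact (Real.continuous_cosh.comp_continuousOn hfc).div
        (Real.continuous_sinh.comp_continuousOn hfc)
        (fun t ht => (hsinhpos t ht).ne')
    · exact hcont.norm
  have hhnn : ∀ t : ℝ, 0 ≤ t → 0 ≤ h t := fun t ht =>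
    mul_nonneg (hcothnn t ht) (norm_nonneg _)
  have hIcc : ∀ a b : ℝ, 0 ≤ a → Set.uIcc a b ⊆ Set.Ici (0:ℝ) → True := fun _ _ _ _ => trivial
  have hsub : ∀ a b : ℝ, 0 ≤ a → 0 ≤ b → Set.uIcc a b ⊆ Set.Ici (0:ℝ) := by
    intro a b ha hb
    intro x hx
    have h1 : min a b ≤ x := hx.1
    exact le_trans (le_min ha hb) h1
  have hInth : ∀ a b : ℝ, 0 ≤ a → 0 ≤ b → IntervalIntegrable h MeasureTheory.volume a b :=
    fun a b ha hb => (hhc.mono (hsub a b ha hb)).intervalIntegrable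
  -- L is monotone on [0, ∞)
  have hmono : ∀ a b : ℝ, 0 ≤ a → a ≤ b → L a ≤ L b := by
    intro a b ha hab
    have hb : 0 ≤ b := le_trans ha hab
    have hsplit : L a + ∫ t in a..b, h t = L b :=
      intervalIntegral.integral_add_adjacent_intervals (hInth 0 a le_rfl ha)
        ((hhc.mono (hsub a b ha hb)).intervalIntegrable)
    have hnn : 0 ≤ ∫ t in a..b, h t :=
      intervalIntegral.integral_nonneg hab (fun t ht => hhnn t (le_trans ha ht.1))
    linarith
  -- key claim: L is unbounded on [0,∞)
  have key : ∀ M : ℝ, 0 ≤ M → ∃ T : ℝ, 0 ≤ T ∧ M < L T := by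
    intro M hM
    by_contra hcon
    push_neg at hcon
    have hbd : ∀ T : ℝ, 0 ≤ T → L T ≤ M := fun T hT => hcon T hT
    -- Step A: ∫₀ᵀ ‖γ'‖ ≤ M
    have hA : ∀ T : ℝ, 0 ≤ T → (∫ t in (0:ℝ)..T, ‖γ' t‖) ≤ M := by
      intro T hT
      have hle : (∫ t in (0:ℝ)..T, ‖γ' t‖) ≤ L T := by
        apply intervalIntegral.integral_mono_on hT
        · exact ((hcont.mono (hsub 0 T le_rfl hT)).norm).intervalIntegrable
        · exact hInth 0 T le_rfl hT
        · intro t ht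
          have h1 := hcoth1 t ht.1
          calc ‖γ' t‖ = 1 * ‖γ' t‖ := (one_mul _).symm
            _ ≤ (Real.cosh (f t) / Real.sinh (f t)) * ‖γ' t‖ :=
                mul_le_mul_of_nonneg_right h1 (norm_nonneg _)
      exact le_trans hle (hbd T hT)
    -- Step B: ‖γ T‖ bounded
    have hB : ∀ T : ℝ, 0 ≤ T → ‖γ T‖ ≤ ‖γ 0‖ + M := by
      intro T hT
      have hftc : (∫ t in (0:ℝ)..T, γ' t) = γ T - γ 0 := by
        apply intervalIntegral.integral_eq_sub_of_hasDerivAt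
        · intro t ht
          exact hderiv t (hsub 0 T le_rfl hT ht)
        · exact (hcont.mono (hsub 0 T le_rfl hT)).intervalIntegrable
      have hnorm : ‖γ T - γ 0‖ ≤ ∫ t in (0:ℝ)..T, ‖γ' t‖ := by
        rw [← hftc]
        exact intervalIntegral.norm_integral_le_integral_norm hT
      have := le_trans hnorm (hA T hT)
      calc ‖γ T‖ = ‖γ 0 + (γ T - γ 0)‖ := by congr 1; abel
        _ ≤ ‖γ 0‖ + ‖γ T - γ 0‖ := norm_add_le _ _
        _ ≤ ‖γ 0‖ + M := by linarith
    -- Step C: lower bound on f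
    set g : ℝ → ℝ := fun t => Real.log (Real.sinh (f t)) with hgdef
    set g' : ℝ → ℝ := fun t => (Real.cosh (f t) / Real.sinh (f t)) * f' t with hg'def
    have hgd : ∀ t : ℝ, 0 ≤ t → HasDerivAt g (g' t) t := by
      intro t ht
      have h1 : HasDerivAt (fun s => Real.sinh (f s)) (Real.cosh (f t) * f' t) t :=
        (Real.hasDerivAt_sinh (f t)).comp t (hfd t ht)
      have h2 : HasDerivAt g ((Real.sinh (f t))⁻¹ * (Real.cosh (f t) * f' t)) t :=
        by have := (Real.hasDerivAt_log (hsinhpos t ht).ne').comp t h1; exact this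
      convert h2 using 1
      field_simp
      ring
    have hg'c : ContinuousOn g' (Set.Ici (0:ℝ)) := by
      apply ContinuousOn.mul
      · exact (Real.continuous_cosh.comp_continuousOn hfc).div
          (Real.continuous_sinh.comp_continuousOn hfc)
          (fun t ht => (hsinhpos t ht).ne')
      · exact fun t ht => ((((EuclideanSpace.proj e).continuous.comp_continuousOn
          hcont) t ht))
    have hC : ∀ T : ℝ, 0 ≤ T → g 0 - M ≤ g T := by
      intro T hT
      have hftc : (∫ t in (0:ℝ)..T, g' t) = g T - g 0 := by
        apply intervalIntegral.integral_eq_sub_of_hasDerivAt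
        · intro t ht
          exact hgd t (hsub 0 T le_rfl hT ht)
        · exact (hg'c.mono (hsub 0 T le_rfl hT)).intervalIntegrable
      have habs : |∫ t in (0:ℝ)..T, g' t| ≤ ∫ t in (0:ℝ)..T, |g' t| := by
        simpa [Real.norm_eq_abs] using
          intervalIntegral.norm_integral_le_integral_norm (f := g') (a := 0) (b := T) hT
      have hcmp : (∫ t in (0:ℝ)..T, |g' t|) ≤ L T := by
        apply intervalIntegral.integral_mono_on hT
        · exact ((hg'c.mono (hsub 0 T le_rfl hT)).norm).intervalIntegrable
        · exact hInth 0 T le_rfl hT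
        · intro t ht
          have h1 : |g' t| = (Real.cosh (f t) / Real.sinh (f t)) * |f' t| := by
            rw [hg'def, abs_mul, abs_of_nonneg (hcothnn t ht.1)]
          rw [h1]
          exact mul_le_mul_of_nonneg_left (euclid_coord_abs_le_norm (γ' t) e)
            (hcothnn t ht.1)
      have h1 : |g T - g 0| ≤ M := by
        rw [← hftc]
        exact le_trans habs (le_trans hcmp (hbd T hT))
      linarith [(abs_le.1 h1).1]
    have hCc : ∀ T : ℝ, 0 ≤ T → Real.exp (g 0 - M) ≤ Real.sinh (f T) := by
      intro T hT
      have h1 := hC T hT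
      calc Real.exp (g 0 - M) ≤ Real.exp (g T) := Real.exp_le_exp.2 (by linarith)
        _ = Real.sinh (f T) := Real.exp_log (hsinhpos T hT)
    set ε : ℝ := Real.arsinh (Real.exp (g 0 - M)) with hεdef
    have hε : 0 < ε := Real.arsinh_pos_iff.2 (Real.exp_pos _)
    have hfε : ∀ T : ℝ, 0 ≤ T → ε ≤ f T := by
      intro T hT
      have := Real.arsinh_le_arsinh.2 (hCc T hT)
      rwa [Real.arsinh_sinh] at this
    -- the compact set
    set K : Set (EuclideanSpace ℝ (Fin n)) :=
      Metric.closedBall 0 (‖γ 0‖ + M) ∩ {x | ε ≤ x e} with hKdef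
    have hKsub : K ⊆ {x | 0 < x e} := fun x hx => lt_of_lt_of_le hε hx.2
    have hKcl : IsClosed {x : EuclideanSpace ℝ (Fin n) | ε ≤ x e} := by
      have : Continuous fun x : EuclideanSpace ℝ (Fin n) => x e :=
        (EuclideanSpace.proj (𝕜 := ℝ) e).continuous
      exact isClosed_le continuous_const this
    have hKcomp : IsCompact K :=
      (isCompact_closedBall (0 : EuclideanSpace ℝ (Fin n)) (‖γ 0‖ + M)).inter_right hKcl
    obtain ⟨T, hT0, hTout⟩ := hdiv K hKsub hKcomp
    apply hTout T le_rfl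
    constructor
    · rw [Metric.mem_closedBall, dist_zero_right]
      exact hB T hT0
    · exact hfε T hT0
  -- conclude
  rw [Filter.tendsto_atTop]
  intro b
  obtain ⟨T₀, hT₀, hb⟩ := key (max b 0) (le_max_right _ _)
  filter_upwards [Filter.eventually_ge_atTop T₀] with T hT
  have h1 := hmono T₀ T hT₀ hT
  have h2 := le_max_left b 0
  linarith
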